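/- arXiv:1706.07940 — 2 statements merged into one kernel-verified Lean document; each statement's English description precedes it below -/
import Mathlib

section
/- Let p be a prime with p ≡ 3 mod 4, n ≥ 1, and k an integer coprime to p. Then there is no group automorphism Φ of ℤ/p^n such that (k/p^n)·Φ(a)·Φ(b) = -(k/p^n)·a·b in ℚ/ℤ for all a, b ∈ ℤ/p^n. -/
/-- `ℚ/ℤ` as an additive group. -/
abbrev QZ : Type := AddCircle (1 : ℚ)

/-- A linking form on a finitely generated abelian group `H`: a bilinear, symmetric,
nonsingular pairing into `ℚ/ℤ`.  Nonsingularity is expressed by saying that the adjoint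
map `a ↦ (b ↦ λ a b)` is injective and surjective onto `Hom(H, ℚ/ℤ)`. -/
structure LinkingForm (H : Type*) [AddCommGroup H] where
  form : H → H → QZ
  add_left : ∀ a b c : H, form (a + b) c = form a c + form b c
  add_right : ∀ a b c : H, form a (b + c) = form a b + form a c
  symm : ∀ a b : H, form a b = form b a
  adjoint_injective : ∀ a : H, (∀ b : H, form a b = 0) → a = 0
  adjoint_surjective : ∀ f : H →+ QZ, ∃ a : H, ∀ b : H, form a b = f b

/-- The `p`-primary part of an abelian group: elements killed by a power of `p`. -/
def primaryPart (H : Type*) [AddCommGroup H] (p : ℕ) : AddSubgroup H where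
  carrier := {g | ∃ k : ℕ, p ^ k • g = 0}
  zero_mem' := ⟨0, smul_zero _⟩
  add_mem' := by
    rintro a b ⟨k, hk⟩ ⟨l, hl⟩
    refine ⟨k + l, ?_⟩
    have ha : p ^ (k + l) • a = 0 := by rw [pow_add, mul_comm, mul_smul, hk, smul_zero]
    have hb : p ^ (k + l) • b = 0 := by rw [pow_add, mul_smul, hl, smul_zero]
    rw [smul_add, ha, hb, add_zero]
  neg_mem' := by rintro a ⟨k, hk⟩; exact ⟨k, by rw [smul_neg, hk, neg_zero]⟩

/-- The standard pairing `(a, b) ↦ (k/pⁿ)·a·b` on `ℤ/pⁿ`, with values in `ℚ/ℤ`. -/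
noncomputable def stdPairing (p n : ℕ) (k : ℤ) (a b : ZMod (p ^ n)) : QZ :=
  ((((k : ℚ) * (a.val : ℚ) * (b.val : ℚ)) / (p : ℚ) ^ n : ℚ) : QZ)

/-!
Only `Φ 1` matters: with `a = b = 1` the condition says `k (r² + 1) ≡ 0 mod pⁿ` for `r = Φ 1`.
Since `k` is a unit mod `pⁿ`, `-1` is then a square mod `pⁿ`, hence mod `p`, which fails for
`p ≡ 3 mod 4`.
-/

theorem coe_intCast_div_natCast_eq_zero_iff {N : ℕ} [NeZero N] (x : ℤ) :
    ((x / N : ℚ) : QZ) = 0 ↔ (x : ZMod N) = 0 := by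
  have hN : (N : ℚ) ≠ 0 := Nat.cast_ne_zero.mpr (NeZero.ne N)
  rw [AddCircle.coe_eq_zero_iff, ZMod.intCast_zmod_eq_zero_iff_dvd]
  simp only [zsmul_eq_mul, mul_one, eq_div_iff hN]
  constructor
  · rintro ⟨m, hm⟩
    exact ⟨m, by exact_mod_cast hm.symm.trans (mul_comm _ _)⟩
  · rintro ⟨m, rfl⟩
    exact ⟨m, by push_cast; ring⟩

theorem stdPairing_eq_neg_iff {p n : ℕ} [NeZero p] (k : ℤ) (a b c d : ZMod (p ^ n)) :
    stdPairing p n k c d = -stdPairing p n k a b ↔ (k : ZMod (p ^ n)) * (c * d + a * b) = 0 := by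
  have hsum : stdPairing p n k c d + stdPairing p n k a b =
      (((k * (c.val * d.val + a.val * b.val) : ℤ) / (p ^ n : ℕ) : ℚ) : QZ) := by
    rw [stdPairing, stdPairing, ← AddCircle.coe_add]
    push_cast
    ring_nf
  rw [eq_neg_iff_add_eq_zero, hsum, coe_intCast_div_natCast_eq_zero_iff]
  push_cast
  simp only [ZMod.natCast_zmod_val]

theorem isUnit_intCast_zmod_pow {p : ℕ} {k : ℤ} (hk : IsCoprime k p) (n : ℕ) :
    IsUnit (k : ZMod (p ^ n)) := by
  have h := (hk.pow_right (n := n)).map (Int.castRingHom (ZMod (p ^ n)))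
  simp only [eq_intCast, Int.cast_natCast, ← Nat.cast_pow, ZMod.natCast_self] at h
  exact isCoprime_zero_right.mp h

/-- for `p ≡ 3 mod 4` prime, `n ≥ 1` and `k` coprime to `p`, there is no
automorphism of `ℤ/pⁿ` carrying the pairing `(k/pⁿ)·a·b` to its negative. -/
theorem no_anti_isometry_three_mod_four (p n : ℕ) (hp : p.Prime) (hp4 : p % 4 = 3)
    (hn : 1 ≤ n) (k : ℤ) (hk : IsCoprime k (p : ℤ)) :
    ¬ ∃ Φ : ZMod (p ^ n) ≃+ ZMod (p ^ n),
      ∀ a b : ZMod (p ^ n),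
        stdPairing p n k (Φ a) (Φ b) = - stdPairing p n k a b := by
  rintro ⟨Φ, hΦ⟩
  have : NeZero p := ⟨hp.ne_zero⟩
  have hsq : Φ 1 * Φ 1 = -1 := by
    have h := (stdPairing_eq_neg_iff k 1 1 (Φ 1) (Φ 1)).mp (hΦ 1 1)
    rw [(isUnit_intCast_zmod_pow hk n).mul_right_eq_zero, mul_one] at h
    exact eq_neg_of_add_eq_zero_left h
  refine Nat.mod_four_ne_three_of_mem_primeFactors_of_isSquare_neg_one ?_ ⟨Φ 1, hsq.symm⟩ hp4
  rw [Nat.primeFactors_prime_pow (by omega) hp]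
  exact Finset.mem_singleton_self p
end

section
/- Let H be a finite cyclic group of order p^n (p an odd prime, n ≥ 1) with a linking form λ. If (H, λ) is isometric to (H, -λ), then -1 is a quadratic residue modulo p. -/
/-
Write `λ` for the form and `u = Φ 1`. Bilinearity over the cyclic group `ℤ/N` gives
`λ(a, b) = λ(ab, 1)`, so `λ(u² + 1, 1) = λ(u, u) + λ(1, 1) = -λ(1, 1) + λ(1, 1) = 0`, and since `1`
generates, nondegeneracy forces `u² = -1` in `ℤ/N`. Reducing from `ℤ/pⁿ` to `ℤ/p` gives the claim.
-/

namespace LinkingForm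

section AddCommGroup

variable {H : Type*} [AddCommGroup H] (lf : LinkingForm H)

def toHom : H →+ H →+ QZ :=
  AddMonoidHom.mk' (fun a => AddMonoidHom.mk' (lf.form a) (lf.add_right a)) fun a b => by
    ext c
    exact lf.add_left a b c

theorem form_zsmul_left (k : ℤ) (a b : H) : lf.form (k • a) b = k • lf.form a b :=
  DFunLike.congr_fun (lf.toHom.map_zsmul k a) b

theorem form_zsmul_right (k : ℤ) (a b : H) : lf.form a (k • b) = k • lf.form a b :=
  (lf.toHom a).map_zsmul k b

end AddCommGroup

section ZMod

variable {N : ℕ} (lf : LinkingForm (ZMod N))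

theorem form_eq_form_mul_one (a b : ZMod N) : lf.form a b = lf.form (a * b) 1 := by
  conv_lhs => rw [← ZMod.intCast_zmod_cast b, ← zsmul_one, lf.form_zsmul_right,
    ← lf.form_zsmul_left, zsmul_eq_mul, mul_comm, ZMod.intCast_zmod_cast]

theorem eq_zero_of_form_one_eq_zero {c : ZMod N} (hc : lf.form c 1 = 0) : c = 0 :=
  lf.adjoint_injective c fun b => by
    rw [← ZMod.intCast_zmod_cast b, ← zsmul_one, lf.form_zsmul_right, hc, smul_zero]

theorem image_one_mul_self_of_anti_isometry (Φ : ZMod N ≃+ ZMod N)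
    (hΦ : ∀ a b : ZMod N, lf.form (Φ a) (Φ b) = -lf.form a b) : Φ 1 * Φ 1 = -1 := by
  rw [← add_eq_zero_iff_eq_neg]
  apply lf.eq_zero_of_form_one_eq_zero
  rw [lf.add_left, ← lf.form_eq_form_mul_one, hΦ, neg_add_cancel]

end ZMod

end LinkingForm

theorem Int.exists_sq_modEq_neg_one_of_isSquare {m : ℕ} (h : IsSquare (-1 : ZMod m)) :
    ∃ r : ℤ, r ^ 2 ≡ -1 [ZMOD m] := by
  obtain ⟨x, hx⟩ := h
  refine ⟨(x.cast : ℤ), (ZMod.intCast_eq_intCast_iff _ _ m).mp ?_⟩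
  push_cast
  rw [sq, ← hx]

theorem neg_one_square_of_cyclic_anti_isometry_general (p n : ℕ)
    (hn : 1 ≤ n) (lf : LinkingForm (ZMod (p ^ n))) (Φ : ZMod (p ^ n) ≃+ ZMod (p ^ n))
    (hΦ : ∀ a b : ZMod (p ^ n), lf.form (Φ a) (Φ b) = - lf.form a b) :
    ∃ r : ℤ, Int.ModEq (p : ℤ) (r ^ 2) (-1) := by
  have hsq : IsSquare (-1 : ZMod (p ^ n)) :=
    ⟨Φ 1, (lf.image_one_mul_self_of_anti_isometry Φ hΦ).symm⟩
  have hsq_p : IsSquare (-1 : ZMod p) := by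
    have hdvd : p ∣ p ^ n := dvd_pow_self p (by omega)
    simpa only [map_neg, map_one] using hsq.map (ZMod.castHom hdvd (ZMod p))
  exact Int.exists_sq_modEq_neg_one_of_isSquare hsq_p

/-- if `ℤ/pⁿ` (`p` an odd prime, `n ≥ 1`) carries a linking form `λ` and
`(H, λ)` is isometric to `(H, -λ)`, then `-1` is a quadratic residue modulo `p`. -/
theorem neg_one_square_of_cyclic_anti_isometry (p n : ℕ) (hp : p.Prime) (hodd : Odd p)
    (hn : 1 ≤ n) (lf : LinkingForm (ZMod (p ^ n))) (Φ : ZMod (p ^ n) ≃+ ZMod (p ^ n))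
    (hΦ : ∀ a b : ZMod (p ^ n), lf.form (Φ a) (Φ b) = - lf.form a b) :
    ∃ r : ℤ, Int.ModEq (p : ℤ) (r ^ 2) (-1) :=
  neg_one_square_of_cyclic_anti_isometry_general p n hn lf Φ hΦ
end
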